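/- Let 𝕜 be a commutative ring, k ≥ 1, and R = 𝕜[x_1,…,x_k]/(x_1x_2⋯x_k). Let M be the R-module ⨁_I R/(x_I), where I runs over all nonempty subintervals [a,b] ⊆ [1,k]. Then the R-algebra B°° := End_R(M) is isomorphic, as an R-algebra, to its opposite algebra (B°°)^op. -/

import Mathlib

/-!
For every `S ⊆ [1,k]` the annihilator of `x_S` in `R` is `(x_{Sᶜ})`, because `∏_{i ∈ S} x_i` is a
non-zero-divisor of the polynomial ring. Hence on each summand `R/(x_I)` the pairing
`(f, g) ↦ x_{Iᶜ} f g` is symmetric and identifies `R/(x_I)` with its `R`-dual. The orthogonal sum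
of these pairings is a perfect symmetric form on `M`, and taking adjoints with respect to it is an
`R`-linear anti-involution of `End_R(M)`.
-/

open MvPolynomial DirectSum

/-- The ring `R = 𝕜[x₁,…,x_k]/(x₁x₂⋯x_k)`, with variables indexed by `Fin k`. -/
abbrev NodalRing (𝕜 : Type*) [CommRing 𝕜] (k : ℕ) : Type _ :=
  MvPolynomial (Fin k) 𝕜 ⧸
    Ideal.span {∏ i : Fin k, (X i : MvPolynomial (Fin k) 𝕜)}

/-- `x_I`: the image in `R` of the monomial `∏_{i ∈ I} x_i` (with `x_∅ = 1`). -/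
noncomputable def xgen (𝕜 : Type*) [CommRing 𝕜] (k : ℕ) (I : Finset (Fin k)) :
    NodalRing 𝕜 k :=
  Ideal.Quotient.mk _ (∏ i ∈ I, X i)

/-- The index type of nonempty subintervals `[a,b] ⊆ [1,k]`, encoded as pairs
`a ≤ b` in `Fin k`. -/
abbrev IntervalIdx (k : ℕ) := {p : Fin k × Fin k // p.1 ≤ p.2}

/-- The `R`-module `M = ⨁_I R/(x_I)`, where `I` runs over all nonempty
subintervals of `[1,k]`. -/
abbrev NodalM (𝕜 : Type*) [CommRing 𝕜] (k : ℕ) : Type _ :=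
  DirectSum (IntervalIdx k) fun p =>
    NodalRing 𝕜 k ⧸ Ideal.span {xgen 𝕜 k (Finset.Icc p.1.1 p.1.2)}

open Function

namespace LinearMap.BilinForm

variable {R M : Type*} [CommSemiring R] [AddCommMonoid M] [Module R M]
  {B : LinearMap.BilinForm R M}

noncomputable def adjointEnd (hB : Bijective B) (f : Module.End R M) : Module.End R M :=
  (LinearEquiv.ofBijective B hB).symm.toLinearMap ∘ₗ f.dualMap ∘ₗ B

variable (hB : Bijective B)

lemma isAdjointPair_adjointEnd (f : Module.End R M) :
    IsAdjointPair B B (adjointEnd hB f) f := fun x y => by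
  have := (LinearEquiv.ofBijective B hB).apply_symm_apply (f.dualMap (B x))
  exact LinearMap.congr_fun this y

lemma eq_adjointEnd_of_isAdjointPair {f g : Module.End R M} (h : IsAdjointPair B B g f) :
    g = adjointEnd hB f :=
  LinearMap.ext fun x => hB.injective <| LinearMap.ext fun y => by
    rw [h, isAdjointPair_adjointEnd]

lemma IsSymm.isAdjointPair_symm (hS : B.IsSymm) {f g : Module.End R M}
    (h : IsAdjointPair B B f g) : IsAdjointPair B B g f := fun x y => by
  rw [hS.eq, ← h, hS.eq]

lemma adjointEnd_adjointEnd (hS : B.IsSymm) (f : Module.End R M) :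
    adjointEnd hB (adjointEnd hB f) = f :=
  (eq_adjointEnd_of_isAdjointPair hB
    (hS.isAdjointPair_symm (isAdjointPair_adjointEnd hB f))).symm

lemma adjointEnd_mul (f g : Module.End R M) :
    adjointEnd hB (f * g) = adjointEnd hB g * adjointEnd hB f :=
  (eq_adjointEnd_of_isAdjointPair hB
    ((isAdjointPair_adjointEnd hB g).mul (isAdjointPair_adjointEnd hB f))).symm

lemma adjointEnd_add (f g : Module.End R M) :
    adjointEnd hB (f + g) = adjointEnd hB f + adjointEnd hB g :=
  (eq_adjointEnd_of_isAdjointPair hB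
    ((isAdjointPair_adjointEnd hB f).add (isAdjointPair_adjointEnd hB g))).symm

lemma adjointEnd_algebraMap (r : R) :
    adjointEnd hB (algebraMap R (Module.End R M) r) = algebraMap R (Module.End R M) r :=
  (eq_adjointEnd_of_isAdjointPair hB fun x y => by
    simp only [Module.algebraMap_end_apply, map_smul, LinearMap.smul_apply]).symm

noncomputable def adjointAlgEquiv (hS : B.IsSymm) :
    Module.End R M ≃ₐ[R] (Module.End R M)ᵐᵒᵖ where
  toFun f := .op (adjointEnd hB f)
  invFun f := adjointEnd hB f.unop
  left_inv f := adjointEnd_adjointEnd hB hS f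
  right_inv f := congrArg MulOpposite.op (adjointEnd_adjointEnd hB hS f.unop)
  map_mul' f g := by rw [adjointEnd_mul, MulOpposite.op_mul]
  map_add' f g := by rw [adjointEnd_add, MulOpposite.op_add]
  commutes' r := by rw [adjointEnd_algebraMap, MulOpposite.algebraMap_apply]

variable {ι : Type*} [Fintype ι] {N : ι → Type*} [∀ i, AddCommMonoid (N i)] [∀ i, Module R (N i)]

noncomputable def pi (B : ∀ i, LinearMap.BilinForm R (N i)) :
    LinearMap.BilinForm R (∀ i, N i) :=
  ∑ i, (B i).compl₁₂ (LinearMap.proj i) (LinearMap.proj i)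

lemma pi_apply (B : ∀ i, LinearMap.BilinForm R (N i)) (x y : ∀ i, N i) :
    pi B x y = ∑ i, B i (x i) (y i) := by
  simp [pi]

lemma isSymm_pi {B : ∀ i, LinearMap.BilinForm R (N i)} (hS : ∀ i, (B i).IsSymm) :
    (pi B).IsSymm :=
  ⟨fun x y => by simp only [pi_apply, (hS _).eq]⟩

lemma bijective_pi {B : ∀ i, LinearMap.BilinForm R (N i)} (hB : ∀ i, Bijective (B i)) :
    Bijective (pi B) := by
  classical
  have : ⇑(pi B) = LinearMap.lsum R N R ∘ Pi.map fun i => B i := by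
    ext x y
    simp [pi_apply]
  exact this ▸ (LinearMap.lsum R N R).bijective.comp (Bijective.piMap hB)

end LinearMap.BilinForm

section QuotientForm

variable {R : Type*} [CommRing R]

structure IsExactPair (a b : R) : Prop where
  mul_eq_zero_iff_left : ∀ r, a * r = 0 ↔ r ∈ Ideal.span {b}
  mul_eq_zero_iff_right : ∀ r, b * r = 0 ↔ r ∈ Ideal.span {a}

lemma IsExactPair.mul_eq_zero {a b : R} (h : IsExactPair a b) : a * b = 0 :=
  (h.mul_eq_zero_iff_left b).2 (Ideal.mem_span_singleton_self b)

variable {a b : R}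

noncomputable def quotMulForm (hab : a * b = 0) : LinearMap.BilinForm R (R ⧸ Ideal.span {a}) :=
  (LinearMap.mul R (R ⧸ Ideal.span {a})).compr₂ <|
    (Ideal.span {a}).liftQ (LinearMap.mulLeft R b) <| by
      rw [Ideal.span_le, Set.singleton_subset_iff, SetLike.mem_coe, LinearMap.mem_ker,
        LinearMap.mulLeft_apply, mul_comm, hab]

lemma quotMulForm_mk (hab : a * b = 0) (f g : R) :
    quotMulForm hab (Ideal.Quotient.mk _ f) (Ideal.Quotient.mk _ g) = b * (f * g) :=
  rfl

lemma isSymm_quotMulForm (hab : a * b = 0) : (quotMulForm hab).IsSymm :=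
  ⟨fun x y => by simp only [quotMulForm, LinearMap.compr₂_apply, LinearMap.mul_apply', mul_comm]⟩

lemma bijective_quotMulForm (h : IsExactPair a b) : Bijective (quotMulForm h.mul_eq_zero) := by
  refine ⟨(injective_iff_map_eq_zero _).2 fun x hx => ?_, fun φ => ?_⟩
  · obtain ⟨f, rfl⟩ := Ideal.Quotient.mk_surjective x
    have hbf := LinearMap.congr_fun hx (Ideal.Quotient.mk _ 1)
    rw [quotMulForm_mk, mul_one, LinearMap.zero_apply] at hbf
    exact Ideal.Quotient.eq_zero_iff_mem.2 ((h.mul_eq_zero_iff_right f).1 hbf)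
  · have hφ : a * φ 1 = 0 := by
      rw [← smul_eq_mul, ← map_smul, Algebra.smul_def, mul_one, Ideal.Quotient.algebraMap_eq,
        Ideal.Quotient.eq_zero_iff_mem.2 (Ideal.mem_span_singleton_self a), map_zero]
    obtain ⟨r, hr⟩ := Ideal.mem_span_singleton.1 ((h.mul_eq_zero_iff_left _).1 hφ)
    refine ⟨Ideal.Quotient.mk _ r, Submodule.linearMap_qext _ (LinearMap.ext_ring ?_)⟩
    change quotMulForm h.mul_eq_zero (Ideal.Quotient.mk _ r) (Ideal.Quotient.mk _ 1) = φ 1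
    rw [quotMulForm_mk, mul_one, hr, mul_comm]

noncomputable def directSumQuotEndAlgEquivOp {ι : Type*} [Fintype ι]
    {a b : ι → R} (h : ∀ i, IsExactPair (a i) (b i)) :
    Module.End R (⨁ i, R ⧸ Ideal.span {a i}) ≃ₐ[R]
      (Module.End R (⨁ i, R ⧸ Ideal.span {a i}))ᵐᵒᵖ :=
  let e := linearEquivFunOnFintype R ι fun i => R ⧸ Ideal.span {a i}
  let B := LinearMap.BilinForm.pi fun i => quotMulForm (h i).mul_eq_zero
  have hB : Bijective B := LinearMap.BilinForm.bijective_pi fun i => bijective_quotMulForm (h i)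
  have hS : B.IsSymm := LinearMap.BilinForm.isSymm_pi fun _ => isSymm_quotMulForm _
  (e.conjAlgEquiv R).trans <|
    (B.adjointAlgEquiv hB hS).trans (AlgEquiv.op (e.conjAlgEquiv R).symm)

end QuotientForm

section Nodal

variable {𝕜 : Type*} [CommRing 𝕜] {k : ℕ}

lemma xgen_mul_xgen_compl (S : Finset (Fin k)) : xgen 𝕜 k S * xgen 𝕜 k Sᶜ = 0 := by
  rw [xgen, xgen, ← map_mul, Finset.prod_mul_prod_compl, Ideal.Quotient.eq_zero_iff_mem]
  exact Ideal.mem_span_singleton_self _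

lemma xgen_mul_eq_zero_iff (S : Finset (Fin k)) (r : NodalRing 𝕜 k) :
    xgen 𝕜 k S * r = 0 ↔ r ∈ Ideal.span {xgen 𝕜 k Sᶜ} := by
  refine ⟨fun h => ?_, fun h => ?_⟩
  · obtain ⟨f, rfl⟩ := Ideal.Quotient.mk_surjective r
    rw [xgen, ← map_mul, Ideal.Quotient.eq_zero_iff_mem, Ideal.mem_span_singleton,
      ← Finset.prod_mul_prod_compl S] at h
    obtain ⟨g, hg⟩ := h
    rw [mul_assoc] at hg
    rw [(isRegular_prod_X S).left hg, map_mul]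
    exact Ideal.mul_mem_right _ _ (Ideal.mem_span_singleton_self _)
  · obtain ⟨c, rfl⟩ := Ideal.mem_span_singleton'.1 h
    rw [mul_left_comm, xgen_mul_xgen_compl, mul_zero]

lemma isExactPair_xgen_compl (S : Finset (Fin k)) :
    IsExactPair (xgen 𝕜 k S) (xgen 𝕜 k Sᶜ) :=
  ⟨xgen_mul_eq_zero_iff S, by simpa using xgen_mul_eq_zero_iff Sᶜ⟩

end Nodal

theorem stmt_10 (𝕜 : Type*) [CommRing 𝕜] (k : ℕ) :
    Nonempty
      (Module.End (NodalRing 𝕜 k) (NodalM 𝕜 k) ≃ₐ[NodalRing 𝕜 k]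
        (Module.End (NodalRing 𝕜 k) (NodalM 𝕜 k))ᵐᵒᵖ) :=
  ⟨directSumQuotEndAlgEquivOp fun _ => isExactPair_xgen_compl _⟩
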